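/- Let m be a non-negative integer. Then for all real numbers x and y, ∑_{p,q ⊢ m} (x^{\underline{|[p]|}} / [p]!) · (y^{\underline{|[q]|}} / [q]!) · N(p,q) = (xy)^{\underline{m}} / m!, where the sum ranges over all pairs of integer partitions p, q of m. -/

import Mathlib

open Finset

/-- Falling factorial of a real number: `x (x-1) ⋯ (x-n+1)`. -/
def fallFac (x : ℝ) (n : ℕ) : ℝ := ∏ i ∈ Finset.range n, (x - i)

/-- `[p]!`: the product of the factorials of the multiplicities of the parts of `p`. -/
def multFact {m : ℕ} (p : Nat.Partition m) : ℕ :=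
  ∏ i ∈ p.parts.toFinset, Nat.factorial (p.parts.count i)

/-- The parts of a partition, as a list, sorted in decreasing order. -/
def partsList {m : ℕ} (p : Nat.Partition m) : List ℕ := p.parts.sort (· ≥ ·)

/-- `N(p,q)`: the number of `|[p]| × |[q]|` binary matrices whose row sums are given
by `p` and whose column sums are given by `q`. -/
noncomputable def Nmat {m : ℕ} (p q : Nat.Partition m) : ℕ :=
  Nat.card {M : Matrix (Fin (Multiset.card p.parts)) (Fin (Multiset.card q.parts)) Bool //
    (∀ i, (∑ j, if M i j then 1 else 0) = (partsList p).getD i 0) ∧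
    (∀ j, (∑ i, if M i j then 1 else 0) = (partsList q).getD j 0)}

/-!
For natural numbers `a` and `b` both sides count the `a × b` binary matrices with `m` ones,
sorted by the partitions `p` and `q` formed by their nonzero row and column sums. A matrix of
type `(p, q)` together with a labelling of its nonzero rows by the parts of `p` is the same as
a `|[p]| × b` matrix with row sums `p` together with an injection of the labels into the `a`
rows; each matrix has `[p]!` labellings. Doing the same for the columns leaves the `N(p,q)`
compressed matrices, so there are `N(p,q) a^{\underline{|[p]|}} b^{\underline{|[q]|}} / ([p]! [q]!)`
matrices of type `(p, q)`, and these add up to `binom(ab, m) = (ab)^{\underline{m}} / m!`.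
Both sides are polynomials in each variable and `N(p,q) = N(q,p)`, so the identity extends
from `ℕ × ℕ` to `ℝ × ℝ` one variable at a time.
-/

open scoped Matrix Nat

section NonzeroValues

variable {α ι : Type*} [Fintype α]

def nonzeroValues (r : α → ℕ) : Multiset ℕ := (Finset.univ.val.map r).filter (· ≠ 0)

lemma nonzeroValues_eq_map_support (r : α → ℕ) :
    nonzeroValues r = ({x | r x ≠ 0} : Finset α).val.map r := by
  rw [nonzeroValues, Multiset.filter_map, Finset.filter_val]
  rfl

lemma pos_of_mem_nonzeroValues {r : α → ℕ} {v : ℕ} (hv : v ∈ nonzeroValues r) : 0 < v :=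
  Nat.pos_of_ne_zero (Multiset.mem_filter.1 hv).2

lemma sum_nonzeroValues (r : α → ℕ) : (nonzeroValues r).sum = ∑ x, r x := by
  rw [nonzeroValues_eq_map_support, Finset.sum_map_val, Finset.sum_filter_ne_zero]

lemma card_nonzeroValues (r : α → ℕ) :
    Multiset.card (nonzeroValues r) = #{x | r x ≠ 0} := by
  rw [nonzeroValues_eq_map_support, Multiset.card_map, Finset.card_def]

lemma count_nonzeroValues (r : α → ℕ) {v : ℕ} (hv : v ≠ 0) :
    (nonzeroValues r).count v = Nat.card {x // r x = v} := by
  classical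
  rw [nonzeroValues, Multiset.count_filter_of_pos (p := (· ≠ 0)) hv, Multiset.count_map,
    Nat.card_eq_fintype_card, Fintype.card_subtype, Finset.card_def, Finset.filter_val]
  simp only [eq_comm]

lemma nonzeroValues_eq_comp_iff [Fintype ι] (r : α → ℕ) (f : ι ↪ α)
    (hf : ∀ i, r (f i) ≠ 0) :
    nonzeroValues r = nonzeroValues (r ∘ f) ↔ ∀ x ∉ Set.range f, r x = 0 := by
  classical
  have hsupport_comp : ({i | (r ∘ f) i ≠ 0} : Finset ι) = univ := by
    simpa using hf
  constructor
  · intro h x hx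
    by_contra hrx
    have hcard : #({x | r x ≠ 0} : Finset α) = Fintype.card ι := by
      rw [← card_nonzeroValues, h, card_nonzeroValues, hsupport_comp, Finset.card_univ]
    have himage : (univ : Finset ι).map f = ({x | r x ≠ 0} : Finset α) := by
      refine Finset.eq_of_subset_of_card_le (fun y hy => ?_) (by simp [hcard])
      obtain ⟨i, -, rfl⟩ := Finset.mem_map.1 hy
      simpa using hf i
    have hmem : x ∈ (univ : Finset ι).map f :=
      himage ▸ Finset.mem_filter.2 ⟨mem_univ x, hrx⟩
    obtain ⟨i, -, rfl⟩ := Finset.mem_map.1 hmem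
    exact hx ⟨i, rfl⟩
  · intro h
    have hsupport : ({x | r x ≠ 0} : Finset α) = (univ : Finset ι).map f := by
      ext x
      simp only [Finset.mem_filter, Finset.mem_univ, true_and, Finset.mem_map]
      refine ⟨fun hrx => ?_, fun ⟨i, hi⟩ => hi ▸ hf i⟩
      by_contra hx
      exact hrx (h x fun ⟨i, hi⟩ => hx ⟨i, hi⟩)
    rw [nonzeroValues_eq_map_support, nonzeroValues_eq_map_support, hsupport, hsupport_comp,
      Finset.map_val, Multiset.map_map]

end NonzeroValues

section FibreEquiv

variable {ι α γ : Type*} [Fintype ι] [DecidableEq γ] {L : ι → γ} {w : α → γ}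

lemma coe_fibreEquiv_congr (e : ∀ c : univ.image L, {i // L i = c} ≃ {x // w x = c}) (j : ι)
    {c : γ} (hc : c ∈ univ.image L) (hj : L j = c) :
    (e ⟨L j, mem_image_of_mem L (mem_univ j)⟩ ⟨j, rfl⟩ : α) =
      e ⟨c, hc⟩ ⟨j, hj⟩ := by
  subst hj
  rfl

lemma finite_fibre (h : ∀ i, Nat.card {x // w x = L i} = Nat.card {j // L j = L i})
    (c : univ.image L) : Finite {x // w x = c} := by
  obtain ⟨c, hc⟩ := c
  obtain ⟨i, -, rfl⟩ := mem_image.1 hc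
  refine Nat.finite_of_card_ne_zero ?_
  rw [h i]
  exact Nat.card_ne_zero.2 ⟨⟨⟨i, rfl⟩⟩, inferInstance⟩

noncomputable def embeddingEquivFibreEquiv
    (h : ∀ i, Nat.card {x // w x = L i} = Nat.card {j // L j = L i}) :
    {f : ι ↪ α // w ∘ f = L} ≃ ∀ c : univ.image L, {i // L i = c} ≃ {x // w x = c} where
  toFun f c :=
    have := finite_fibre h c
    Equiv.ofBijective (fun i => ⟨f.1 i, (congrFun f.2 i).trans i.2⟩)
      ((Nat.bijective_iff_injective_and_card _).2
        ⟨fun i j hij => Subtype.ext (f.1.injective (congrArg Subtype.val hij)), by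
          obtain ⟨c, hc⟩ := c
          obtain ⟨i, -, rfl⟩ := mem_image.1 hc
          exact (h i).symm⟩)
  invFun e := ⟨⟨fun i => e ⟨L i, mem_image_of_mem L (mem_univ i)⟩ ⟨i, rfl⟩,
    fun i j hij => by
      dsimp only at hij
      have hL : L j = L i := by
        simpa only [(e _ _).2] using congrArg w hij.symm
      have hmem := mem_image_of_mem L (mem_univ i)
      rw [coe_fibreEquiv_congr e i hmem rfl, coe_fibreEquiv_congr e j hmem hL] at hij
      exact congrArg Subtype.val ((e _).injective (Subtype.ext hij))⟩,
    funext fun i => (e _ _).2⟩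
  left_inv _ := rfl
  right_inv e := funext fun c => Equiv.ext fun i =>
    Subtype.ext (coe_fibreEquiv_congr e i c.2 i.2)

theorem card_embedding_comp_eq
    (h : ∀ i, Nat.card {x // w x = L i} = Nat.card {j // L j = L i}) :
    Nat.card {f : ι ↪ α // w ∘ f = L} =
      ∏ c ∈ univ.image L, (Nat.card {i // L i = c})! := by
  rw [Nat.card_congr (embeddingEquivFibreEquiv h), Nat.card_pi,
    ← Finset.prod_coe_sort (univ.image L)]
  refine Fintype.prod_congr _ _ fun c => ?_
  have := finite_fibre h c
  obtain ⟨c, hc⟩ := c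
  obtain ⟨i, -, rfl⟩ := mem_image.1 hc
  obtain ⟨e⟩ := Finite.card_eq.1 (h i).symm
  rw [← Nat.card_perm, Nat.card_congr (Equiv.equivCongr (Equiv.refl _) e.symm)]

end FibreEquiv

section Matrices

variable {ι α β : Type*}

noncomputable def extendRows (f : ι ↪ α) (M₀ : Matrix ι β Bool) : Matrix α β Bool :=
  Function.extend f M₀ fun _ _ => false

lemma submatrix_extendRows (f : ι ↪ α) (M₀ : Matrix ι β Bool) :
    (extendRows f M₀).submatrix f id = M₀ :=
  funext fun i => f.injective.extend_apply M₀ (fun _ _ => false) i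

variable [Fintype β]

def rowSum (M : Matrix α β Bool) (i : α) : ℕ := ∑ j, if M i j then 1 else 0

lemma rowSum_eq_zero_iff (M : Matrix α β Bool) (i : α) :
    rowSum M i = 0 ↔ M i = fun _ => false := by
  simp [rowSum, funext_iff]

lemma rowSum_submatrix (M : Matrix α β Bool) (f : ι → α) :
    rowSum (M.submatrix f id) = rowSum M ∘ f := rfl

lemma rowSum_transpose_submatrix [Fintype ι] [Fintype α] (M : Matrix α β Bool) (f : ι ↪ α)
    (hM : ∀ x ∉ Set.range f, rowSum M x = 0) :
    rowSum (M.submatrix f id)ᵀ = rowSum Mᵀ := by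
  funext j
  refine Fintype.sum_of_injective f f.injective _ _ (fun x hx => ?_) fun i => rfl
  simp [(rowSum_eq_zero_iff M x).1 (hM x hx)]

lemma rowSum_extendRows_of_notMem_range (f : ι ↪ α) (M₀ : Matrix ι β Bool) {x : α}
    (hx : x ∉ Set.range f) : rowSum (extendRows f M₀) x = 0 :=
  (rowSum_eq_zero_iff _ x).2 (Function.extend_apply' _ _ x hx)

lemma extendRows_submatrix (M : Matrix α β Bool) (f : ι ↪ α)
    (hM : ∀ x ∉ Set.range f, rowSum M x = 0) :
    extendRows f (M.submatrix f id) = M := by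
  funext x
  by_cases hx : x ∈ Set.range f
  · obtain ⟨i, rfl⟩ := hx
    exact f.injective.extend_apply (M.submatrix f id) _ i
  · exact (Function.extend_apply' _ _ x hx).trans ((rowSum_eq_zero_iff M x).1 (hM x hx)).symm

lemma card_transpose [Fintype α] (R : (α → ℕ) → Prop) (S : (β → ℕ) → Prop) :
    Nat.card {M : Matrix α β Bool // R (rowSum M) ∧ S (rowSum Mᵀ)} =
      Nat.card {M : Matrix β α Bool // S (rowSum M) ∧ R (rowSum Mᵀ)} :=
  Nat.card_congr
    { toFun := fun M => ⟨M.1ᵀ, M.2.symm⟩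
      invFun := fun M => ⟨M.1ᵀ, M.2.symm⟩
      left_inv := fun _ => rfl
      right_inv := fun _ => rfl }

end Matrices

section LabelRows

variable {ι α β : Type*} [Fintype ι] [Fintype α] [Fintype β]

lemma nonzeroValues_rowSum_eq_iff {L : ι → ℕ} (hL : ∀ i, L i ≠ 0) {M : Matrix α β Bool}
    {f : ι ↪ α} (hf : rowSum M ∘ f = L) :
    nonzeroValues (rowSum M) = nonzeroValues L ↔ ∀ x ∉ Set.range f, rowSum M x = 0 := by
  subst hf
  exact nonzeroValues_eq_comp_iff _ f hL

noncomputable def labelRowsEquiv {L : ι → ℕ} (hL : ∀ i, L i ≠ 0)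
    (P : (β → ℕ) → Prop) :
    (Σ M : {M : Matrix α β Bool //
        nonzeroValues (rowSum M) = nonzeroValues L ∧ P (rowSum Mᵀ)},
      {f : ι ↪ α // rowSum M.1 ∘ f = L}) ≃
    {M₀ : Matrix ι β Bool // rowSum M₀ = L ∧ P (rowSum M₀ᵀ)} × (ι ↪ α) where
  toFun M := (⟨M.1.1.submatrix M.2.1 id, M.2.2, by
      rw [rowSum_transpose_submatrix _ _ ((nonzeroValues_rowSum_eq_iff hL M.2.2).1 M.1.2.1)]
      exact M.1.2.2⟩, M.2.1)
  invFun M :=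
    have hrow : rowSum (extendRows M.2 M.1.1) ∘ M.2 = L := by
      rw [← rowSum_submatrix, submatrix_extendRows, M.1.2.1]
    have hzero : ∀ x ∉ Set.range M.2, rowSum (extendRows M.2 M.1.1) x = 0 :=
      fun _ hx => rowSum_extendRows_of_notMem_range _ _ hx
    ⟨⟨extendRows M.2 M.1.1, (nonzeroValues_rowSum_eq_iff hL hrow).2 hzero, by
      rw [← rowSum_transpose_submatrix _ _ hzero, submatrix_extendRows]
      exact M.1.2.2⟩, M.2, hrow⟩
  left_inv M := Sigma.subtype_ext (Subtype.ext
    (extendRows_submatrix _ _ ((nonzeroValues_rowSum_eq_iff hL M.2.2).1 M.1.2.1))) rfl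
  right_inv M := Prod.ext (Subtype.ext (submatrix_extendRows _ _)) rfl

theorem card_nonzeroValues_rowSum_mul {L : ι → ℕ} (hL : ∀ i, L i ≠ 0)
    (P : (β → ℕ) → Prop) :
    Nat.card {M : Matrix α β Bool //
        nonzeroValues (rowSum M) = nonzeroValues L ∧ P (rowSum Mᵀ)} *
        ∏ c ∈ univ.image L, (Nat.card {i // L i = c})! =
      Nat.card {M₀ : Matrix ι β Bool // rowSum M₀ = L ∧ P (rowSum M₀ᵀ)} *
        (Fintype.card α).descFactorial (Fintype.card ι) := by
  classical
  have hfibre : ∀ M : {M : Matrix α β Bool //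
      nonzeroValues (rowSum M) = nonzeroValues L ∧ P (rowSum Mᵀ)},
      Nat.card {f : ι ↪ α // rowSum M.1 ∘ f = L} =
        ∏ c ∈ univ.image L, (Nat.card {i // L i = c})! :=
    fun M => card_embedding_comp_eq fun i => by
      rw [← count_nonzeroValues _ (hL i), ← count_nonzeroValues _ (hL i), M.2.1]
  calc _ = Nat.card (Σ M : {M : Matrix α β Bool //
        nonzeroValues (rowSum M) = nonzeroValues L ∧ P (rowSum Mᵀ)},
        {f : ι ↪ α // rowSum M.1 ∘ f = L}) := by
        rw [Nat.card_sigma, Finset.sum_congr rfl fun M _ => hfibre M, sum_const, smul_eq_mul,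
          Finset.card_univ, Nat.card_eq_fintype_card]
    _ = _ := by
        rw [Nat.card_congr (labelRowsEquiv hL P), Nat.card_prod,
          Nat.card_eq_fintype_card (α := ι ↪ α), Fintype.card_embedding_eq]

end LabelRows

section Partitions

variable {m : ℕ}

def partsFn (p : Nat.Partition m) (i : Fin (Multiset.card p.parts)) : ℕ := (partsList p).getD i 0

lemma map_partsFn (p : Nat.Partition m) : Finset.univ.val.map (partsFn p) = p.parts := by
  have hlen : (partsList p).length = Multiset.card p.parts := Multiset.length_sort _
  have hofFn : List.ofFn (partsFn p) = partsList p :=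
    List.ext_get (by simp [hlen]) fun i _ hi => by simp [partsFn, List.getElem?_eq_getElem hi]
  rw [Fin.univ_def, Multiset.map_coe, ← List.ofFn_eq_map, hofFn, partsList, Multiset.sort_eq]

lemma partsFn_ne_zero (p : Nat.Partition m) (i : Fin (Multiset.card p.parts)) : partsFn p i ≠ 0 :=
  (p.parts_pos (map_partsFn p ▸ Multiset.mem_map_of_mem _ (Finset.mem_univ_val i))).ne'

lemma nonzeroValues_partsFn (p : Nat.Partition m) : nonzeroValues (partsFn p) = p.parts := by
  rw [nonzeroValues, map_partsFn, Multiset.filter_eq_self]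
  exact fun v hv => (p.parts_pos hv).ne'

lemma multFact_eq_prod_card (p : Nat.Partition m) :
    multFact p = ∏ c ∈ univ.image (partsFn p), (Nat.card {i // partsFn p i = c})! := by
  have himage : univ.image (partsFn p) = p.parts.toFinset :=
    congrArg Multiset.toFinset (map_partsFn p)
  rw [multFact, himage]
  refine Finset.prod_congr rfl fun c hc => ?_
  rw [← count_nonzeroValues _ (p.parts_pos (Multiset.mem_toFinset.1 hc)).ne',
    nonzeroValues_partsFn]

lemma Nmat_eq_card (p q : Nat.Partition m) :
    Nmat p q = Nat.card
      {M : Matrix (Fin (Multiset.card p.parts)) (Fin (Multiset.card q.parts)) Bool //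
        rowSum M = partsFn p ∧ rowSum Mᵀ = partsFn q} := by
  simp only [Nmat, funext_iff]
  rfl

lemma Nmat_comm (p q : Nat.Partition m) : Nmat p q = Nmat q p := by
  rw [Nmat_eq_card, Nmat_eq_card]
  exact card_transpose (· = partsFn p) (· = partsFn q)

theorem card_profiles_mul {α β : Type*} [Fintype α] [Fintype β] (p q : Nat.Partition m) :
    Nat.card {M : Matrix α β Bool //
        nonzeroValues (rowSum M) = p.parts ∧ nonzeroValues (rowSum Mᵀ) = q.parts} *
        (multFact p * multFact q) =
      Nmat p q * ((Fintype.card α).descFactorial (Multiset.card p.parts) *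
        (Fintype.card β).descFactorial (Multiset.card q.parts)) := by
  have rows := card_nonzeroValues_rowSum_mul (α := α) (β := β) (partsFn_ne_zero p)
    (nonzeroValues · = q.parts)
  have cols := card_nonzeroValues_rowSum_mul (α := β) (partsFn_ne_zero q) (· = partsFn p)
  have swap₁ := card_transpose (α := Fin (Multiset.card p.parts)) (β := β) (· = partsFn p)
    (nonzeroValues · = q.parts)
  have swap₂ := card_transpose (α := Fin (Multiset.card q.parts))
    (β := Fin (Multiset.card p.parts)) (· = partsFn q) (· = partsFn p)
  rw [nonzeroValues_partsFn, ← multFact_eq_prod_card, Fintype.card_fin] at rows cols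
  rw [Nmat_eq_card, ← swap₂, ← mul_assoc, rows, mul_right_comm, swap₁, cols]
  ring

end Partitions

section Decomposition

variable {α β : Type*} [Fintype α] [Fintype β]

lemma sum_rowSum_transpose (M : Matrix α β Bool) : ∑ j, rowSum Mᵀ j = ∑ i, rowSum M i :=
  Finset.sum_comm

lemma card_sum_rowSum_eq_choose (m : ℕ) :
    Nat.card {M : Matrix α β Bool // ∑ i, rowSum M i = m} =
      (Fintype.card α * Fintype.card β).choose m := by
  classical
  have hsupport (M : Matrix α β Bool) : #{z : α × β | M z.1 z.2} = ∑ i, rowSum M i := by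
    rw [Finset.card_filter, Fintype.sum_prod_type]
    rfl
  let e : {M : Matrix α β Bool // ∑ i, rowSum M i = m} ≃ {s : Finset (α × β) // #s = m} :=
    { toFun := fun M => ⟨({z | M.1 z.1 z.2} : Finset (α × β)), (hsupport M.1).trans M.2⟩
      invFun := fun s => ⟨Matrix.of fun i j => decide ((i, j) ∈ s.1), by
        rw [← hsupport]
        simpa using s.2⟩
      left_inv := fun M => Subtype.ext (by ext; simp)
      right_inv := fun s => Subtype.ext (by ext; simp) }
  rw [Nat.card_congr e, Nat.card_eq_fintype_card, Fintype.card_finset_len, Fintype.card_prod]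

theorem sum_card_profiles (m : ℕ) :
    ∑ p : Nat.Partition m, ∑ q : Nat.Partition m, Nat.card {M : Matrix α β Bool //
        nonzeroValues (rowSum M) = p.parts ∧ nonzeroValues (rowSum Mᵀ) = q.parts} =
      (Fintype.card α * Fintype.card β).choose m := by
  classical
  let profiles (M : {M : Matrix α β Bool // ∑ i, rowSum M i = m}) :
      Nat.Partition m × Nat.Partition m :=
    (⟨nonzeroValues (rowSum M.1), pos_of_mem_nonzeroValues, by rw [sum_nonzeroValues, M.2]⟩,
      ⟨nonzeroValues (rowSum M.1ᵀ), pos_of_mem_nonzeroValues, by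
        rw [sum_nonzeroValues, sum_rowSum_transpose, M.2]⟩)
  have hfibre : ∀ p q : Nat.Partition m, Nat.card {M // profiles M = (p, q)} =
      Nat.card {M : Matrix α β Bool //
        nonzeroValues (rowSum M) = p.parts ∧ nonzeroValues (rowSum Mᵀ) = q.parts} :=
    fun p q => Nat.card_congr <|
      (Equiv.subtypeEquivRight fun M => by
        simp [profiles, Prod.ext_iff, Nat.Partition.ext_iff]).trans
        (Equiv.subtypeSubtypeEquivSubtype fun h => by rw [← sum_nonzeroValues, h.1, p.parts_sum])
  rw [← card_sum_rowSum_eq_choose, Nat.card_congr (Equiv.sigmaFiberEquiv profiles).symm,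
    Nat.card_sigma, Fintype.sum_prod_type]
  simp only [hfibre]

end Decomposition

theorem Polynomial.eq_of_eval_natCast_eq {R : Type*} [CommRing R] [IsDomain R] [CharZero R]
    {P Q : Polynomial R} (h : ∀ n : ℕ, P.eval (n : R) = Q.eval (n : R)) : P = Q :=
  P.eq_of_infinite_eval_eq Q (Set.infinite_of_injective_forall_mem Nat.cast_injective h)

section FallingFactorial

open Polynomial

lemma fallFac_eq_eval (x : ℝ) (n : ℕ) : fallFac x n = (descPochhammer ℝ n).eval x :=
  (descPochhammer_eval_eq_prod_range n x).symm

lemma fallFac_natCast (a n : ℕ) : fallFac a n = a.descFactorial n := by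
  rw [fallFac_eq_eval, descPochhammer_eval_eq_descFactorial]

lemma fallFac_mul_div_factorial_eq_eval (m : ℕ) (x y : ℝ) :
    fallFac (x * y) m / m ! =
      (C (m ! : ℝ)⁻¹ * (descPochhammer ℝ m).comp (C x * X)).eval y := by
  simp only [fallFac_eq_eval, eval_mul, eval_C, eval_comp, eval_X]
  ring

lemma multFact_pos {m : ℕ} (p : Nat.Partition m) : 0 < multFact p :=
  Finset.prod_pos fun _ _ => Nat.factorial_pos _

end FallingFactorial

section PartitionPairSum

open Polynomial

variable (m : ℕ)

noncomputable def partitionPairSum (x y : ℝ) : ℝ :=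
  ∑ p : Nat.Partition m, ∑ q : Nat.Partition m,
    fallFac x (Multiset.card p.parts) / multFact p *
      (fallFac y (Multiset.card q.parts) / multFact q) * Nmat p q

lemma partitionPairSum_comm (x y : ℝ) : partitionPairSum m x y = partitionPairSum m y x := by
  rw [partitionPairSum, partitionPairSum, Finset.sum_comm]
  refine Finset.sum_congr rfl fun p _ => Finset.sum_congr rfl fun q _ => ?_
  rw [Nmat_comm]
  ring

lemma partitionPairSum_eq_eval (x y : ℝ) :
    partitionPairSum m x y = (∑ p : Nat.Partition m, ∑ q : Nat.Partition m,
      C (fallFac x (Multiset.card p.parts) / multFact p / multFact q * Nmat p q) *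
        descPochhammer ℝ (Multiset.card q.parts)).eval y := by
  simp only [partitionPairSum, eval_finsetSum, eval_mul, eval_C, ← fallFac_eq_eval]
  refine Finset.sum_congr rfl fun p _ => Finset.sum_congr rfl fun q _ => ?_
  ring

lemma partitionPairSum_natCast (a b : ℕ) :
    partitionPairSum m a b = fallFac ((a : ℝ) * b) m / m ! := by
  have hterm : ∀ p q : Nat.Partition m,
      fallFac a (Multiset.card p.parts) / multFact p *
          (fallFac b (Multiset.card q.parts) / multFact q) * Nmat p q =
        Nat.card {M : Matrix (Fin a) (Fin b) Bool //
          nonzeroValues (rowSum M) = p.parts ∧ nonzeroValues (rowSum Mᵀ) = q.parts} := by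
    intro p q
    have key := card_profiles_mul (α := Fin a) (β := Fin b) p q
    rw [Fintype.card_fin, Fintype.card_fin] at key
    have hp : (multFact p : ℝ) ≠ 0 := by exact_mod_cast (multFact_pos p).ne'
    have hq : (multFact q : ℝ) ≠ 0 := by exact_mod_cast (multFact_pos q).ne'
    rw [fallFac_natCast, fallFac_natCast, div_mul_div_comm, div_mul_eq_mul_div,
      div_eq_iff (mul_ne_zero hp hq), mul_comm]
    exact_mod_cast key.symm
  have hchoose := sum_card_profiles (α := Fin a) (β := Fin b) m
  rw [Fintype.card_fin, Fintype.card_fin] at hchoose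
  rw [partitionPairSum, Finset.sum_congr rfl fun p _ => Finset.sum_congr rfl fun q _ => hterm p q,
    ← Nat.cast_mul, fallFac_natCast, Nat.descFactorial_eq_factorial_mul_choose, Nat.cast_mul,
    mul_div_cancel_left₀ _ (by positivity)]
  exact_mod_cast hchoose

end PartitionPairSum

theorem stmt1 (m : ℕ) (x y : ℝ) :
    ∑ p : Nat.Partition m, ∑ q : Nat.Partition m,
      fallFac x (Multiset.card p.parts) / multFact p *
        (fallFac y (Multiset.card q.parts) / multFact q) * Nmat p q
    = fallFac (x * y) m / Nat.factorial m := by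
  have extend (u : ℝ) (h : ∀ b : ℕ, partitionPairSum m u b = fallFac (u * b) m / m !)
      (v : ℝ) : partitionPairSum m u v = fallFac (u * v) m / m ! := by
    rw [partitionPairSum_eq_eval, fallFac_mul_div_factorial_eq_eval]
    congr 1
    exact Polynomial.eq_of_eval_natCast_eq fun n => by
      rw [← partitionPairSum_eq_eval, ← fallFac_mul_div_factorial_eq_eval, h]
  have nat_left (a : ℕ) (v : ℝ) : partitionPairSum m a v = fallFac (a * v) m / m ! :=
    extend a (partitionPairSum_natCast m a) v
  exact extend x (fun b => by rw [partitionPairSum_comm, nat_left, mul_comm]) y
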